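/- Let x : [0,T] → ℝ^d be càdlàg with Σ_{s∈(0,T]} |Δx(s)|² < ∞ and let n : [0,T] → ℝ be continuous; extend both by x(u) := x(T) and n(u) := n(T) for u > T. Let G : Θ → ℝ^d be non-anticipative, locally uniformly continuous and locally bounded. For ε > 0 and t ∈ [0,T] set I_ε(t) := (1/ε) ∫₀^t [ ∫₀¹ ( G((s+ε)∧T, x_{s∧} ⊕_{(s+ε)∧T} λ(x(s+ε) − x(s))) − G((s+ε)∧T, x_{s∧}) ) dλ ] · (x(s+ε) − x(s)) · (n(s+ε) − n(s)) ds. Let (ε_k)_{k∈ℕ} be a sequence decreasing to 0 such that limsup_k (1/ε_k) ∫₀^T |x((s+ε_k)∧T) − x(s)|² ds < ∞ and limsup_k (1/ε_k) ∫₀^T |n((s+ε_k)∧T) − n(s)|² ds < ∞. Then sup_{t∈[0,T]} |I_{ε_k}(t)| → 0 as k → ∞. (This is the pathwise statement underlying the convergence of the term I^{ε,11} in the proof of the C^{0,1} Itô–Dupire formula, applied with G = ∇_x F.) -/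

import Mathlib

noncomputable section
open Filter Topology

/-- A function `x : ℝ → E`, viewed as a path on `[0,T]`, is càdlàg on `[0,T]`. -/
def IsCadlagOn {E : Type*} [TopologicalSpace E] (T : ℝ) (x : ℝ → E) : Prop :=
  (∀ t ∈ Set.Ico (0 : ℝ) T, ContinuousWithinAt x (Set.Ici t) t) ∧
  ∀ t ∈ Set.Ioc (0 : ℝ) T, ∃ L, Tendsto x (𝓝[<] t) (𝓝 L)

/-- The stopped path `x_{t∧}`. -/
def stopAt {E : Type*} (x : ℝ → E) (t : ℝ) : ℝ → E := fun s => if s < t then x s else x t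

/-- The predictable stopped path `x⁻_{t∧}`. -/
def pstopAt {E : Type*} [TopologicalSpace E] (x : ℝ → E) (t : ℝ) : ℝ → E :=
  fun s => if s < t then x s else Function.leftLim x t

/-- The vertically bumped path `x ⊕_t y`. -/
def vplus {E : Type*} [Add E] (x : ℝ → E) (t : ℝ) (y : E) : ℝ → E :=
  fun s => if s < t then x s else x t + y

/-- The jump `Δx(t) = x(t) - x(t-)`. -/
def jumpAt {E : Type*} [TopologicalSpace E] [Sub E] (x : ℝ → E) (t : ℝ) : E :=
  x t - Function.leftLim x t

/-- The pseudo-distance `d_Θ` on `Θ = [0,T] × D([0,T])`: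
`d_Θ((t,x),(t',x')) = |t - t'| + sup_{s ∈ [0,T]} ‖x_{t∧}(s) - x'_{t'∧}(s)‖`. -/
def dTheta {E : Type*} [SeminormedAddGroup E] (T : ℝ) (p q : ℝ × (ℝ → E)) : ℝ :=
  |p.1 - q.1| + ⨆ s : Set.Icc (0 : ℝ) T, ‖stopAt p.2 p.1 s.1 - stopAt q.2 q.1 s.1‖

/-- A functional on `Θ` is non-anticipative if `F(t,x) = F(t, x_{t∧})`. -/
def NonAnticipative {E α : Type*} (T : ℝ) (F : ℝ → (ℝ → E) → α) : Prop :=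
  ∀ t ∈ Set.Icc (0 : ℝ) T, ∀ x, F t x = F t (stopAt x t)

/-- `F` is vertically differentiable at `(t,x)` with vertical gradient `G`:
the map `y ↦ F(t, x ⊕_t y)` has gradient `G` at `0`. -/
def HasVerticalGradientAt {d : ℕ} (F : ℝ → (ℝ → EuclideanSpace ℝ (Fin d)) → ℝ)
    (G : EuclideanSpace ℝ (Fin d)) (t : ℝ) (x : ℝ → EuclideanSpace ℝ (Fin d)) : Prop :=
  HasGradientAt (fun y => F t (vplus x t y)) G 0

/-- `F ∈ C^{0,1}(Θ)` with vertical gradient functional `G = ∇_x F`: `F` and `G` are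
non-anticipative, `G t x` is the vertical gradient of `F` at every `(t,x) ∈ Θ`, and `G` is
continuous on `Θ` with respect to `d_Θ`. -/
def IsC01 {d : ℕ} (T : ℝ) (F : ℝ → (ℝ → EuclideanSpace ℝ (Fin d)) → ℝ)
    (G : ℝ → (ℝ → EuclideanSpace ℝ (Fin d)) → EuclideanSpace ℝ (Fin d)) : Prop :=
  NonAnticipative T F ∧ NonAnticipative T G ∧
  (∀ t ∈ Set.Icc (0 : ℝ) T, ∀ x, IsCadlagOn T x → HasVerticalGradientAt F (G t x) t x) ∧
  (∀ t ∈ Set.Icc (0 : ℝ) T, ∀ x, IsCadlagOn T x → ∀ ε > (0 : ℝ), ∃ δ > (0 : ℝ),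
    ∀ t' ∈ Set.Icc (0 : ℝ) T, ∀ x', IsCadlagOn T x' →
      dTheta T (t, x) (t', x') < δ → ‖G t x - G t' x'‖ < ε)

/-- `δ` is a family of moduli of continuity witnessing the local uniform continuity of `G`:
for each `K`, `δ K` is non-negative and non-decreasing on `ℝ₊`, continuous at `0` and vanishing
at `0`, and `‖G(t,x) - G(t',x')‖ ≤ δ K (d_Θ((t,x),(t',x')))` whenever `‖x‖ ∨ ‖x'‖ ≤ K`. -/
def IsModulusFamily {d : ℕ} (T : ℝ)
    (G : ℝ → (ℝ → EuclideanSpace ℝ (Fin d)) → EuclideanSpace ℝ (Fin d))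
    (δ : ℝ → ℝ → ℝ) : Prop :=
  (∀ K r, 0 ≤ r → 0 ≤ δ K r) ∧ (∀ K, MonotoneOn (δ K) (Set.Ici 0)) ∧
  (∀ K, ContinuousWithinAt (δ K) (Set.Ici 0) 0) ∧ (∀ K, δ K 0 = 0) ∧
  ∀ K > (0 : ℝ), ∀ t ∈ Set.Icc (0 : ℝ) T, ∀ t' ∈ Set.Icc (0 : ℝ) T, ∀ x x',
    IsCadlagOn T x → IsCadlagOn T x' →
    (∀ s ∈ Set.Icc (0 : ℝ) T, ‖x s‖ ≤ K) → (∀ s ∈ Set.Icc (0 : ℝ) T, ‖x' s‖ ≤ K) →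
    ‖G t x - G t' x'‖ ≤ δ K (dTheta T (t, x) (t', x'))

/-! Fix `s` and write `Δ = x((s+ε)∧T) - x(s)`, `ν = n((s+ε)∧T) - n(s)`. If `K` bounds `x` on
`[0,T]` and `B` bounds `G` on paths bounded by `3K`, the `λ`-integral has norm at most
`min(δ_{3K}(|Δ|), 2B)`. Splitting according to whether `|Δ| ≤ η`, the integrand is bounded by
`δ_{3K}(η)/2 · (|Δ|² + ν²) + (2Bβ/η) |Δ|²`, where `β ≥ sup_s |ν|` is small for small `ε` by the
uniform continuity of `n`. Integrating and dividing by `ε` bounds `sup_t |I_ε(t)|` by the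
approximate quadratic variations of `x` and `n`, which stay bounded, times constants that are
made small by choosing first `η` and then `ε`. -/

open Set Bornology MeasureTheory

lemma measurable_of_forall_continuousWithinAt_Ici {E : Type*} [TopologicalSpace E]
    [TopologicalSpace.PseudoMetrizableSpace E] [MeasurableSpace E] [BorelSpace E] {f : ℝ → E}
    (hf : ∀ t, ContinuousWithinAt f (Ici t) t) : Measurable f := by
  set a : ℕ → ℝ → ℝ := fun n s => (⌊s * (n + 1)⌋ + 1) / (n + 1)
  have ha : ∀ n s, s < a n s ∧ a n s ≤ s + 1 / (n + 1) := by
    intro n s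
    have hn : (0 : ℝ) < n + 1 := by positivity
    constructor
    · rw [lt_div_iff₀ hn]
      exact Int.lt_floor_add_one _
    · rw [div_le_iff₀ hn, add_mul, one_div_mul_cancel hn.ne']
      linarith [Int.floor_le (s * (n + 1))]
  refine measurable_of_tendsto_metrizable (f := fun n s => f (a n s)) (fun n => ?_)
    (tendsto_pi_nhds.2 fun s => ?_)
  · exact (measurable_of_countable fun k : ℤ => f ((k + 1) / (n + 1))).comp
      (Int.measurable_floor.comp (measurable_id.mul_const _))
  · have hlim : Tendsto (fun n : ℕ => s + 1 / ((n : ℝ) + 1)) atTop (𝓝 s) := by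
      simpa using tendsto_const_nhds.add (tendsto_one_div_add_atTop_nhds_zero_nat (𝕜 := ℝ))
    refine (hf s).tendsto.comp (tendsto_nhdsWithin_iff.2 ⟨?_, Eventually.of_forall
      fun n => (ha n s).1.le⟩)
    exact tendsto_of_tendsto_of_tendsto_of_le_of_le tendsto_const_nhds hlim
      (fun n => (ha n s).1.le) fun n => (ha n s).2

lemma min_add_mem_Icc {T s ε : ℝ} (hs : s ∈ Icc 0 T) (hε : 0 ≤ ε) : min (s + ε) T ∈ Icc 0 T :=
  ⟨le_min (by linarith [hs.1]) (hs.1.trans hs.2), min_le_right _ _⟩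

lemma apply_min_eq_of_forall_le {α : Type*} {T : ℝ} {f : ℝ → α} (hf : ∀ u, T ≤ u → f u = f T)
    (a : ℝ) : f (min a T) = f a := by
  rcases le_total a T with h | h
  · rw [min_eq_left h]
  · rw [min_eq_right h, hf a h]

lemma mul_mul_le_of_imp_le {a b m μ M β η : ℝ} (ha : 0 ≤ a) (hb : 0 ≤ b) (hm : 0 ≤ m)
    (hμ : 0 ≤ μ) (hη : 0 < η) (hmμ : a ≤ η → m ≤ μ) (hmM : m ≤ M) (hbβ : b ≤ β) :
    m * a * b ≤ (μ / 2 + M * β / η) * a ^ 2 + μ / 2 * b ^ 2 := by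
  have hMβ : 0 ≤ M * β := mul_nonneg (hm.trans hmM) (hb.trans hbβ)
  have hMβη : 0 ≤ M * β / η := div_nonneg hMβ hη.le
  rcases le_or_gt a η with h | h
  · calc m * a * b ≤ μ * a * b := by gcongr; exact hmμ h
      _ ≤ μ / 2 * a ^ 2 + μ / 2 * b ^ 2 := by nlinarith [mul_nonneg hμ (sq_nonneg (a - b))]
      _ ≤ _ := by nlinarith [mul_nonneg hMβη (sq_nonneg a)]
  · calc m * a * b ≤ M * a * β := by
          rw [mul_right_comm, mul_right_comm M]; gcongr; exact hm.trans hmM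
      _ ≤ M * β / η * a ^ 2 := by
          rw [div_mul_eq_mul_div, le_div_iff₀ hη]
          nlinarith [mul_nonneg (mul_nonneg hMβ ha) (sub_nonneg.2 h.le)]
      _ ≤ _ := by nlinarith [mul_nonneg hμ (sq_nonneg a), mul_nonneg hμ (sq_nonneg b)]

lemma abs_intervalIntegral_le_of_abs_le {f φ : ℝ → ℝ} {a b t : ℝ} (ht : t ∈ Icc a b)
    (hfφ : ∀ s ∈ Icc a b, |f s| ≤ φ s) (hφ : IntervalIntegrable φ volume a b) :
    |∫ s in a..t, f s| ≤ ∫ s in a..b, φ s :=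
  calc |∫ s in a..t, f s| ≤ ∫ s in a..t, φ s :=
        intervalIntegral.norm_integral_le_of_norm_le (f := f) ht.1
          (Eventually.of_forall fun s hs => hfφ s ⟨hs.1.le, hs.2.trans ht.2⟩)
          (hφ.mono_set (by
            rw [uIcc_of_le ht.1, uIcc_of_le (ht.1.trans ht.2)]
            exact Icc_subset_Icc_right ht.2))
    _ ≤ ∫ s in a..b, φ s :=
        intervalIntegral.integral_mono_interval le_rfl ht.1 ht.2
          ((ae_restrict_mem measurableSet_Ioc).mono fun s hs =>
            (abs_nonneg _).trans (hfφ s (Ioc_subset_Icc_self hs))) hφ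

lemma ContinuousOn.eventually_forall_abs_sub_le {n : ℝ → ℝ} {T β : ℝ}
    (hn : ContinuousOn n (Icc 0 T)) (hβ : 0 < β) :
    ∀ᶠ ε in 𝓝[>] 0, ∀ s ∈ Icc 0 T, |n (min (s + ε) T) - n s| ≤ β := by
  obtain ⟨θ, hθ, hnθ⟩ := Metric.uniformContinuousOn_iff_le.1
    (isCompact_Icc.uniformContinuousOn_of_continuous hn) β hβ
  filter_upwards [Ioo_mem_nhdsGT hθ] with ε hε s hs
  have hmem := min_add_mem_Icc hs hε.1.le
  have hdist : dist (min (s + ε) T) s ≤ θ := by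
    rw [Real.dist_eq, abs_le]
    have hs' : s ≤ min (s + ε) T := le_min (by linarith [hε.1]) hs.2
    constructor <;> linarith [min_le_left (s + ε) T, hε.2]
  simpa [Real.dist_eq] using hnθ _ hmem _ hs hdist

section Cadlag

variable {E : Type*} {T : ℝ} {x : ℝ → E}

lemma IsCadlagOn.of_eqOn_Iio_const_Ici [TopologicalSpace E] (hx : IsCadlagOn T x) {f : ℝ → E}
    {c : ℝ} {v : E} (hfx : EqOn f x (Iio c)) (hfv : EqOn f (fun _ => v) (Ici c)) :
    IsCadlagOn T f := by
  constructor
  · intro t ht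
    rcases lt_or_ge t c with h | h
    · refine (hx.1 t ht).congr_of_eventuallyEq ?_ (hfx h)
      filter_upwards [nhdsWithin_le_nhds (eventually_lt_nhds h)] with u hu using hfx hu
    · exact continuousWithinAt_const.congr (fun u hu => hfv (h.trans hu)) (hfv h)
  · intro t ht
    rcases le_or_gt t c with h | h
    · obtain ⟨L, hL⟩ := hx.2 t ht
      exact ⟨L, hL.congr' <| eventually_nhdsWithin_of_forall fun u hu =>
        (hfx (lt_of_lt_of_le hu h)).symm⟩
    · refine ⟨v, tendsto_const_nhds.congr' ?_⟩
      filter_upwards [Ioo_mem_nhdsLT h] with u hu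
      exact (hfv (mem_Ici.2 hu.1.le)).symm

lemma IsCadlagOn.stopAt [TopologicalSpace E] (hx : IsCadlagOn T x) (s : ℝ) :
    IsCadlagOn T (stopAt x s) :=
  hx.of_eqOn_Iio_const_Ici (fun _ hu => if_pos hu) (fun _ hu => if_neg (not_lt.2 hu))

lemma IsCadlagOn.vplus [TopologicalSpace E] [Add E] (hx : IsCadlagOn T x) (c : ℝ) (y : E) :
    IsCadlagOn T (vplus x c y) :=
  hx.of_eqOn_Iio_const_Ici (fun _ hu => if_pos hu) (fun _ hu => if_neg (not_lt.2 hu))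

lemma IsCadlagOn.exists_mem_nhdsWithin_isBounded_image [PseudoMetricSpace E]
    (hx : IsCadlagOn T x) {t : ℝ} (ht : t ∈ Icc 0 T) :
    ∃ S ∈ 𝓝[Icc 0 T] t, IsBounded (x '' S) := by
  have hright : ∃ S ∈ 𝓝[≥] t, IsBounded (x '' (S ∩ Icc 0 T)) := by
    rcases ht.2.lt_or_eq with h | rfl
    · obtain ⟨S, hS, hb⟩ := Metric.exists_isBounded_image_of_tendsto (hx.1 t ⟨ht.1, h⟩)
      exact ⟨S, hS, hb.subset (image_mono inter_subset_left)⟩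
    · refine ⟨Ici t, self_mem_nhdsWithin, (isBounded_singleton (x := x t)).subset ?_⟩
      rintro _ ⟨u, ⟨hu, hu'⟩, rfl⟩
      rw [le_antisymm hu'.2 hu]; rfl
  have hleft : ∃ S ∈ 𝓝[<] t, IsBounded (x '' (S ∩ Icc 0 T)) := by
    rcases ht.1.lt_or_eq with h | rfl
    · obtain ⟨L, hL⟩ := hx.2 t ⟨h, ht.2⟩
      obtain ⟨S, hS, hb⟩ := Metric.exists_isBounded_image_of_tendsto hL
      exact ⟨S, hS, hb.subset (image_mono inter_subset_left)⟩
    · refine ⟨Iio 0, self_mem_nhdsWithin, isBounded_empty.subset ?_⟩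
      rintro _ ⟨u, ⟨hu, hu'⟩, -⟩
      exact absurd hu'.1 (not_le.2 hu)
  obtain ⟨Sr, hSr, hbr⟩ := hright
  obtain ⟨Sl, hSl, hbl⟩ := hleft
  refine ⟨Icc 0 T ∩ (Sl ∪ Sr), inter_mem_nhdsWithin _ ?_, ?_⟩
  · rw [← nhdsLT_sup_nhdsGE]
    exact union_mem_sup hSl hSr
  · rw [inter_comm, union_inter_distrib_right, image_union]
    exact hbl.union hbr

lemma IsCadlagOn.isBounded_image [PseudoMetricSpace E] (hx : IsCadlagOn T x) :
    IsBounded (x '' Icc 0 T) := by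
  refine isCompact_Icc.induction_on (p := fun S => IsBounded (x '' S)) (by simp)
    (fun _ _ hST hT => hT.subset (image_mono hST)) (fun _ _ hS hT => ?_)
    (fun _ ht => hx.exists_mem_nhdsWithin_isBounded_image ht)
  rw [image_union]
  exact hS.union hT

lemma IsCadlagOn.exists_norm_le [SeminormedAddGroup E] (hx : IsCadlagOn T x) :
    ∃ K > 0, ∀ s ∈ Icc 0 T, ‖x s‖ ≤ K := by
  obtain ⟨C, hC⟩ := isBounded_iff_forall_norm_le.1 hx.isBounded_image
  exact ⟨max C 1, by positivity, fun s hs => (hC _ (mem_image_of_mem x hs)).trans (le_max_left _ _)⟩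

lemma IsCadlagOn.continuousWithinAt_Ici_comp_projIcc [TopologicalSpace E]
    (hx : IsCadlagOn T x) (hT : 0 ≤ T) (t : ℝ) :
    ContinuousWithinAt (fun s => x (projIcc 0 T hT s)) (Ici t) t := by
  set p := fun s => (projIcc 0 T hT s : ℝ)
  have hp : Monotone p := fun _ _ h => monotone_projIcc hT h
  by_cases h : p t < T
  · refine ContinuousWithinAt.comp (f := p) (hx.1 (p t) ⟨(projIcc 0 T hT t).2.1, h⟩)
      (continuous_subtype_val.comp continuous_projIcc).continuousWithinAt
      fun u hu => hp (mem_Ici.1 hu)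
  · have hconst : ∀ u ∈ Ici t, p u = p t := fun u hu =>
      le_antisymm ((projIcc 0 T hT u).2.2.trans (not_lt.1 h)) (hp hu)
    exact continuousWithinAt_const.congr (fun u hu => congrArg x (hconst u hu))
      (congrArg x (hconst t self_mem_Ici))

lemma IsCadlagOn.intervalIntegrable_norm_sub_sq [NormedAddCommGroup E] (hx : IsCadlagOn T x)
    (hT : 0 ≤ T) {ε : ℝ} (hε : 0 ≤ ε) :
    IntervalIntegrable (fun s => ‖x (min (s + ε) T) - x s‖ ^ 2) volume 0 T := by
  -- clamped to `[0,T]`, the path becomes right-continuous everywhere, hence measurable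
  set y := fun s => x (projIcc 0 T hT s)
  have hyx : ∀ s ∈ Icc 0 T, y s = x s := fun s hs => by simp only [y, projIcc_of_mem hT hs]
  obtain ⟨K, -, hK⟩ := hx.exists_norm_le
  have hy_meas : Measurable fun s => ‖y (min (s + ε) T) - y s‖ ^ 2 := by
    refine measurable_of_forall_continuousWithinAt_Ici fun t => ?_
    have hshift : ContinuousWithinAt (fun s => y (min (s + ε) T)) (Ici t) t :=
      (hx.continuousWithinAt_Ici_comp_projIcc hT _).comp
        (by fun_prop : Continuous fun s : ℝ => min (s + ε) T).continuousWithinAt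
        fun u hu => min_le_min_right T (by linarith [mem_Ici.1 hu])
    exact ((hshift.sub (hx.continuousWithinAt_Ici_comp_projIcc hT t)).norm).pow 2
  have hy_int : IntervalIntegrable (fun s => ‖y (min (s + ε) T) - y s‖ ^ 2)
      volume 0 T := by
    refine (intervalIntegrable_iff_integrableOn_Ioc_of_le hT).2
      (Measure.integrableOn_of_bounded (M := (2 * K) ^ 2) measure_Ioc_lt_top.ne
        hy_meas.aestronglyMeasurable (Eventually.of_forall fun s => ?_))
    have hyK : ∀ u, ‖y u‖ ≤ K := fun u => hK _ (projIcc 0 T hT u).2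
    rw [norm_pow, norm_norm]
    gcongr
    exact (norm_sub_le _ _).trans (by linarith [hyK (min (s + ε) T), hyK s])
  refine hy_int.congr fun s hs => ?_
  rw [uIoc_of_le hT] at hs
  simp only [hyx _ (min_add_mem_Icc (Ioc_subset_Icc_self hs) hε), hyx s (Ioc_subset_Icc_self hs)]

end Cadlag

section PathOperations

variable {E : Type*} [SeminormedAddCommGroup E] {T K : ℝ} {z : ℝ → E}

lemma norm_stopAt_le (hz : ∀ u ∈ Icc 0 T, ‖z u‖ ≤ K) {s : ℝ} (hs : s ∈ Icc 0 T) :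
    ∀ u ∈ Icc 0 T, ‖stopAt z s u‖ ≤ K := fun u hu => by
  unfold stopAt
  split_ifs
  exacts [hz u hu, hz s hs]

lemma norm_vplus_le (hz : ∀ u ∈ Icc 0 T, ‖z u‖ ≤ K) {c : ℝ} (hc : c ∈ Icc 0 T) (y : E) :
    ∀ u ∈ Icc 0 T, ‖vplus z c y u‖ ≤ K + ‖y‖ := fun u hu => by
  unfold vplus
  split_ifs
  · exact (hz u hu).trans (le_add_of_nonneg_right (norm_nonneg _))
  · exact (norm_add_le _ _).trans (add_le_add_left (hz c hc) _)

lemma dTheta_nonneg (p q : ℝ × (ℝ → E)) : 0 ≤ dTheta T p q :=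
  add_nonneg (abs_nonneg _) (Real.iSup_nonneg fun _ => norm_nonneg _)

lemma dTheta_vplus_le (c : ℝ) (y : E) : dTheta T (c, vplus z c y) (c, z) ≤ ‖y‖ := by
  simp only [dTheta, sub_self, abs_zero, zero_add]
  refine Real.iSup_le (fun u => ?_) (norm_nonneg y)
  unfold stopAt vplus
  split_ifs <;> simp_all

end PathOperations

section Functional

variable {d : ℕ} {T K B : ℝ}
  {G : ℝ → (ℝ → EuclideanSpace ℝ (Fin d)) → EuclideanSpace ℝ (Fin d)} {δ : ℝ → ℝ → ℝ}

lemma IsModulusFamily.exists_pos_lt (hδ : IsModulusFamily T G δ) (K : ℝ) {ζ : ℝ} (hζ : 0 < ζ) :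
    ∃ η > 0, δ K η < ζ := by
  have hlim : Tendsto (δ K) (𝓝[>] 0) (𝓝 0) := by
    simpa [ContinuousWithinAt, hδ.2.2.2.1 K] using
      (hδ.2.2.1 K).tendsto.mono_left (nhdsWithin_mono _ Ioi_subset_Ici_self)
  obtain ⟨η, hη, hδη⟩ := ((hlim.eventually_lt_const hζ).and self_mem_nhdsWithin).exists
  exact ⟨η, hδη, hη⟩

lemma IsModulusFamily.norm_sub_vplus_le (hδ : IsModulusFamily T G δ) (hK : 0 < K)
    (hB : ∀ t ∈ Icc 0 T, ∀ z, IsCadlagOn T z → (∀ s ∈ Icc 0 T, ‖z s‖ ≤ K) → ‖G t z‖ ≤ B)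
    {q : ℝ → EuclideanSpace ℝ (Fin d)} (hq : IsCadlagOn T q) {Kq : ℝ}
    (hqK : ∀ s ∈ Icc 0 T, ‖q s‖ ≤ Kq) {t : ℝ} (ht : t ∈ Icc 0 T) {y : EuclideanSpace ℝ (Fin d)}
    (hy : Kq + ‖y‖ ≤ K) :
    ‖G t (vplus q t y) - G t q‖ ≤ min (δ K ‖y‖) (2 * B) := by
  have hqK' : ∀ s ∈ Icc 0 T, ‖q s‖ ≤ K := fun s hs =>
    (hqK s hs).trans (by linarith [norm_nonneg y])
  have hpK : ∀ s ∈ Icc 0 T, ‖vplus q t y s‖ ≤ K := fun s hs =>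
    (norm_vplus_le hqK ht y s hs).trans hy
  refine le_min ?_ ?_
  · exact (hδ.2.2.2.2 K hK t ht t ht _ _ (hq.vplus t y) hq hpK hqK').trans
      (hδ.2.1 K (dTheta_nonneg _ _) (norm_nonneg y) (dTheta_vplus_le t y))
  · exact (norm_sub_le _ _).trans (by
      linarith [hB t ht _ (hq.vplus t y) hpK, hB t ht q hq hqK'])

lemma IsModulusFamily.norm_integral_sub_vplus_le (hδ : IsModulusFamily T G δ) (hK : 0 < K)
    (hB : ∀ t ∈ Icc 0 T, ∀ z, IsCadlagOn T z → (∀ s ∈ Icc 0 T, ‖z s‖ ≤ K) → ‖G t z‖ ≤ B)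
    {q : ℝ → EuclideanSpace ℝ (Fin d)} (hq : IsCadlagOn T q) {Kq : ℝ}
    (hqK : ∀ s ∈ Icc 0 T, ‖q s‖ ≤ Kq) {t : ℝ} (ht : t ∈ Icc 0 T) {y : EuclideanSpace ℝ (Fin d)}
    (hy : Kq + ‖y‖ ≤ K) :
    ‖∫ l in (0 : ℝ)..1, (G t (vplus q t (l • y)) - G t q)‖ ≤ min (δ K ‖y‖) (2 * B) := by
  have hpt : ∀ l ∈ uIoc (0 : ℝ) 1,
      ‖G t (vplus q t (l • y)) - G t q‖ ≤ min (δ K ‖y‖) (2 * B) := fun l hl => by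
    rw [uIoc_of_le zero_le_one] at hl
    have hly : ‖l • y‖ ≤ ‖y‖ := by
      rw [norm_smul, Real.norm_of_nonneg hl.1.le]
      exact mul_le_of_le_one_left (norm_nonneg y) hl.2
    exact (hδ.norm_sub_vplus_le hK hB hq hqK ht (by linarith)).trans
      (min_le_min_right _ (hδ.2.1 K (norm_nonneg _) (norm_nonneg y) hly))
  simpa using intervalIntegral.norm_integral_le_of_norm_le_const hpt

end Functional

section Remainder

variable {d : ℕ} {T K B : ℝ} {x : ℝ → EuclideanSpace ℝ (Fin d)} {n : ℝ → ℝ}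
  {G : ℝ → (ℝ → EuclideanSpace ℝ (Fin d)) → EuclideanSpace ℝ (Fin d)} {δ : ℝ → ℝ → ℝ}

/-- The integrand of `I_ε`. -/
def remainderIntegrand (T ε : ℝ)
    (G : ℝ → (ℝ → EuclideanSpace ℝ (Fin d)) → EuclideanSpace ℝ (Fin d))
    (x : ℝ → EuclideanSpace ℝ (Fin d)) (n : ℝ → ℝ) (s : ℝ) : ℝ :=
  (inner ℝ
    (∫ l in (0 : ℝ)..1,
      (G (min (s + ε) T) (vplus (stopAt x s) (min (s + ε) T) (l • (x (s + ε) - x s))) -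
        G (min (s + ε) T) (stopAt x s)))
    (x (s + ε) - x s) : ℝ) * (n (s + ε) - n s)

lemma abs_remainderIntegrand_le (hx : IsCadlagOn T x) (hxT : ∀ u, T ≤ u → x u = x T)
    (hnT : ∀ u, T ≤ u → n u = n T) (hδ : IsModulusFamily T G δ) (hK : 0 < K)
    (hxK : ∀ s ∈ Icc 0 T, ‖x s‖ ≤ K)
    (hB : ∀ t ∈ Icc 0 T, ∀ z, IsCadlagOn T z → (∀ s ∈ Icc 0 T, ‖z s‖ ≤ 3 * K) → ‖G t z‖ ≤ B)
    {ε η β s : ℝ} (hε : 0 ≤ ε) (hη : 0 < η) (hs : s ∈ Icc 0 T)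
    (hβ : |n (min (s + ε) T) - n s| ≤ β) :
    |remainderIntegrand T ε G x n s| ≤
      (δ (3 * K) η / 2 + 2 * B * β / η) * ‖x (min (s + ε) T) - x s‖ ^ 2 +
        δ (3 * K) η / 2 * |n (min (s + ε) T) - n s| ^ 2 := by
  have ht := min_add_mem_Icc hs hε
  have hΔ : ‖x (min (s + ε) T) - x s‖ ≤ 2 * K :=
    (norm_sub_le _ _).trans (by linarith [hxK _ ht, hxK s hs])
  have hI := hδ.norm_integral_sub_vplus_le (by positivity) hB (hx.stopAt s)
    (norm_stopAt_le hxK hs) ht (y := x (min (s + ε) T) - x s) (by linarith)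
  unfold remainderIntegrand
  rw [← apply_min_eq_of_forall_le hxT (s + ε), ← apply_min_eq_of_forall_le hnT (s + ε), abs_mul]
  refine (mul_le_mul_of_nonneg_right (abs_real_inner_le_norm _ _) (abs_nonneg _)).trans ?_
  exact mul_mul_le_of_imp_le (norm_nonneg _) (abs_nonneg _) (norm_nonneg _)
    (hδ.1 _ _ hη.le) hη
    (fun h => (hI.trans (min_le_left _ _)).trans (hδ.2.1 _ (norm_nonneg _) hη.le h))
    (hI.trans (min_le_right _ _)) hβ

lemma abs_integral_remainderIntegrand_le (hT : 0 ≤ T) (hx : IsCadlagOn T x)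
    (hxT : ∀ u, T ≤ u → x u = x T) (hn : ContinuousOn n (Icc 0 T))
    (hnT : ∀ u, T ≤ u → n u = n T) (hδ : IsModulusFamily T G δ) (hK : 0 < K)
    (hxK : ∀ s ∈ Icc 0 T, ‖x s‖ ≤ K)
    (hB : ∀ t ∈ Icc 0 T, ∀ z, IsCadlagOn T z → (∀ s ∈ Icc 0 T, ‖z s‖ ≤ 3 * K) → ‖G t z‖ ≤ B)
    {ε η β t : ℝ} (hε : 0 < ε) (hη : 0 < η)
    (hβ : ∀ s ∈ Icc 0 T, |n (min (s + ε) T) - n s| ≤ β) (ht : t ∈ Icc 0 T) :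
    |(1 / ε) * ∫ s in (0 : ℝ)..t, remainderIntegrand T ε G x n s| ≤
      (δ (3 * K) η / 2 + 2 * B * β / η) *
          ((1 / ε) * ∫ s in (0 : ℝ)..T, ‖x (min (s + ε) T) - x s‖ ^ 2) +
        δ (3 * K) η / 2 * ((1 / ε) * ∫ s in (0 : ℝ)..T, |n (min (s + ε) T) - n s| ^ 2) := by
  have hX := hx.intervalIntegrable_norm_sub_sq hT hε.le
  have hN : IntervalIntegrable (fun s => |n (min (s + ε) T) - n s| ^ 2) volume 0 T :=
    ContinuousOn.intervalIntegrable_of_Icc hT <|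
      (((hn.comp (by fun_prop : Continuous fun s : ℝ => min (s + ε) T).continuousOn
        fun s hs => min_add_mem_Icc hs hε.le).sub hn).abs).pow 2
  have hint := abs_intervalIntegral_le_of_abs_le ht
    (fun s hs => abs_remainderIntegrand_le hx hxT hnT hδ hK hxK hB hε.le hη hs (hβ s hs))
    ((hX.const_mul _).add (hN.const_mul _))
  rw [intervalIntegral.integral_add (hX.const_mul _) (hN.const_mul _),
    intervalIntegral.integral_const_mul, intervalIntegral.integral_const_mul] at hint
  rw [abs_mul, abs_of_pos (one_div_pos.2 hε)]
  calc _ ≤ 1 / ε * ((δ (3 * K) η / 2 + 2 * B * β / η) *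
          (∫ s in (0 : ℝ)..T, ‖x (min (s + ε) T) - x s‖ ^ 2) +
        δ (3 * K) η / 2 * ∫ s in (0 : ℝ)..T, |n (min (s + ε) T) - n s| ^ 2) := by gcongr
    _ = _ := by ring

end Remainder

theorem stmt9_general (T : ℝ) (hT : 0 < T) (d : ℕ)
    (x : ℝ → EuclideanSpace ℝ (Fin d)) (hx : IsCadlagOn T x)
    (hxT : ∀ u, T ≤ u → x u = x T)
    (n : ℝ → ℝ) (hn : ContinuousOn n (Set.Icc (0 : ℝ) T)) (hnT : ∀ u, T ≤ u → n u = n T)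
    (G : ℝ → (ℝ → EuclideanSpace ℝ (Fin d)) → EuclideanSpace ℝ (Fin d))
    (δ : ℝ → ℝ → ℝ) (hδ : IsModulusFamily T G δ)
    (hGb : ∀ K > (0 : ℝ), ∃ B : ℝ, ∀ t ∈ Set.Icc (0 : ℝ) T, ∀ z, IsCadlagOn T z →
      (∀ s ∈ Set.Icc (0 : ℝ) T, ‖z s‖ ≤ K) → ‖G t z‖ ≤ B)
    (ε : ℕ → ℝ) (hεpos : ∀ k, 0 < ε k)
    (hεlim : Tendsto ε atTop (𝓝 0))
    (hX2 : ∃ C : ℝ, ∀ᶠ k in atTop,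
      (1 / ε k) * ∫ s in (0 : ℝ)..T, ‖x (min (s + ε k) T) - x s‖ ^ 2 ≤ C)
    (hN2 : ∃ C : ℝ, ∀ᶠ k in atTop,
      (1 / ε k) * ∫ s in (0 : ℝ)..T, |n (min (s + ε k) T) - n s| ^ 2 ≤ C) :
    Tendsto
      (fun k : ℕ => ⨆ t : Set.Icc (0 : ℝ) T,
        |(1 / ε k) * ∫ s in (0 : ℝ)..(t.1 : ℝ),
            (inner ℝ
              (∫ l in (0 : ℝ)..1,
                (G (min (s + ε k) T)
                    (vplus (stopAt x s) (min (s + ε k) T) (l • (x (s + ε k) - x s))) -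
                  G (min (s + ε k) T) (stopAt x s)))
              (x (s + ε k) - x s) : ℝ) *
              (n (s + ε k) - n s)|)
      atTop (𝓝 0) := by
  obtain ⟨K, hK, hxK⟩ := hx.exists_norm_le
  obtain ⟨B₀, hB₀⟩ := hGb (3 * K) (by positivity)
  obtain ⟨CX, hCX⟩ := hX2
  obtain ⟨CN, hCN⟩ := hN2
  set B := max B₀ 1
  set D := max (max CX CN) 1
  have hε : Tendsto ε atTop (𝓝[>] 0) := tendsto_nhdsWithin_iff.2 ⟨hεlim, .of_forall hεpos⟩
  have : Nonempty (Icc 0 T) := ⟨⟨0, le_rfl, hT.le⟩⟩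
  refine Metric.tendsto_nhds.2 fun ζ hζ => ?_
  obtain ⟨η, hη, hδη⟩ := hδ.exists_pos_lt (3 * K) (show 0 < ζ / (2 * D) by positivity)
  have hβ : 0 < ζ * η / (8 * B * D) := by positivity
  filter_upwards [hCX, hCN, hε.eventually (hn.eventually_forall_abs_sub_le hβ)]
    with k hXk hNk hnk
  rw [Real.dist_eq, sub_zero, abs_of_nonneg (Real.iSup_nonneg fun _ => abs_nonneg _)]
  refine (ciSup_le fun t => abs_integral_remainderIntegrand_le hT.le hx hxT hn hnT hδ hK hxK
    (fun t ht z hz hzK => (hB₀ t ht z hz hzK).trans (le_max_left B₀ 1)) (hεpos k) hη hnk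
    t.2).trans_lt ?_
  have hB : 0 < B := one_pos.trans_le (le_max_right _ _)
  have hD : 0 < D := one_pos.trans_le (le_max_right _ _)
  have hμ : 0 ≤ δ (3 * K) η := hδ.1 _ _ hη.le
  have hXD := hXk.trans ((le_max_left CX CN).trans (le_max_left _ 1))
  have hND := hNk.trans ((le_max_right CX CN).trans (le_max_left _ 1))
  calc _ ≤ (δ (3 * K) η / 2 + 2 * B * (ζ * η / (8 * B * D)) / η) * D + δ (3 * K) η / 2 * D := by
        gcongr
    _ = δ (3 * K) η * D + ζ / 4 := by field_simp [hB.ne', hD.ne', hη.ne']; ring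
    _ < ζ := by linarith [(lt_div_iff₀ (by positivity)).1 hδη]

/-- Convergence of the term `I^{ε,11}` in the proof of the `C^{0,1}` Itô–Dupire formula:
for a càdlàg path `x` with square-summable jumps extended by `x(T)` after `T`, a continuous
`n`, and a non-anticipative, locally uniformly continuous and locally bounded `G`, the quantity
`I_ε(t) = (1/ε) ∫₀^t [∫₀¹ (G((s+ε)∧T, x_{s∧} ⊕_{(s+ε)∧T} λ(x(s+ε)-x(s))) - G((s+ε)∧T, x_{s∧})) dλ]
  • (x(s+ε)-x(s)) (n(s+ε)-n(s)) ds`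
satisfies `sup_{t∈[0,T]} |I_{ε_k}(t)| → 0` along any sequence `ε_k ↓ 0` for which the
approximate quadratic variations of `x` and `n` stay bounded. -/
theorem stmt9 (T : ℝ) (hT : 0 < T) (d : ℕ) (hd : 1 ≤ d)
    (x : ℝ → EuclideanSpace ℝ (Fin d)) (hx : IsCadlagOn T x)
    (hxT : ∀ u, T ≤ u → x u = x T)
    (hjump : Summable (fun s : Set.Ioc (0 : ℝ) T => ‖jumpAt x s.1‖ ^ 2))
    (n : ℝ → ℝ) (hn : ContinuousOn n (Set.Icc (0 : ℝ) T)) (hnT : ∀ u, T ≤ u → n u = n T)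
    (G : ℝ → (ℝ → EuclideanSpace ℝ (Fin d)) → EuclideanSpace ℝ (Fin d))
    (hGna : NonAnticipative T G)
    (δ : ℝ → ℝ → ℝ) (hδ : IsModulusFamily T G δ)
    (hGb : ∀ K > (0 : ℝ), ∃ B : ℝ, ∀ t ∈ Set.Icc (0 : ℝ) T, ∀ z, IsCadlagOn T z →
      (∀ s ∈ Set.Icc (0 : ℝ) T, ‖z s‖ ≤ K) → ‖G t z‖ ≤ B)
    (ε : ℕ → ℝ) (hεpos : ∀ k, 0 < ε k) (hεanti : StrictAnti ε)
    (hεlim : Tendsto ε atTop (𝓝 0))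
    (hX2 : ∃ C : ℝ, ∀ᶠ k in atTop,
      (1 / ε k) * ∫ s in (0 : ℝ)..T, ‖x (min (s + ε k) T) - x s‖ ^ 2 ≤ C)
    (hN2 : ∃ C : ℝ, ∀ᶠ k in atTop,
      (1 / ε k) * ∫ s in (0 : ℝ)..T, |n (min (s + ε k) T) - n s| ^ 2 ≤ C) :
    Tendsto
      (fun k : ℕ => ⨆ t : Set.Icc (0 : ℝ) T,
        |(1 / ε k) * ∫ s in (0 : ℝ)..(t.1 : ℝ),
            (inner ℝ
              (∫ l in (0 : ℝ)..1,
                (G (min (s + ε k) T)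
                    (vplus (stopAt x s) (min (s + ε k) T) (l • (x (s + ε k) - x s))) -
                  G (min (s + ε k) T) (stopAt x s)))
              (x (s + ε k) - x s) : ℝ) *
              (n (s + ε k) - n s)|)
      atTop (𝓝 0) :=
  stmt9_general T hT d x hx hxT n hn hnT G δ hδ hGb ε hεpos hεlim hX2 hN2
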